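/- There exists a constant C > 0 such that for all real x and all t ≥ 1, |∫_{ℝ} e^{i x ξ + i t ξ√(1+ξ²)} dξ| ≤ C t^{-1/3}. -/

import Mathlib

/-!
On `[0, ∞)` the phase derivative `ψ ξ = x + t (1 + 2ξ²) / √(1 + ξ²)` is increasing, with
`ψ' ξ ≥ t min ξ 1`; hence `ψ` gains at least `t δ² / 2` over any interval of length `δ ≤ 1`
there. Outside a window of width `2δ` around the point where `ψ` changes sign we thus have
`|ψ| ≥ t δ² / 2`, and van der Corput's first-derivative test (integration by parts against
`1 / ψ`) bounds the integral there by `O(1 / (t δ²))`; the choice `δ = t^(-1/3)` balances this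
against the trivial bound `2δ` on the window. Since the phase is odd, the integral over `[-R, R]`
is twice the real part of the one over `[0, R]`, and it converges because `ψ ξ ≥ x + t ξ`
makes the first-derivative test bound the tails.
-/

open Filter Set intervalIntegral

section VanDerCorput

variable {φ ψ ψ' : ℝ → ℝ} {a b m : ℝ}

theorem integral_deriv_div_sq_le (hab : a ≤ b) (hm : 0 < m)
    (hψ : ∀ ξ ∈ Icc a b, HasDerivAt ψ (ψ' ξ) ξ) (hψ' : ContinuousOn ψ' (Icc a b))
    (hψ_sign : (∀ ξ ∈ Icc a b, m ≤ ψ ξ) ∨ ∀ ξ ∈ Icc a b, ψ ξ ≤ -m) :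
    ∫ ξ in a..b, ψ' ξ / ψ ξ ^ 2 ≤ 1 / m := by
  have hne : ∀ ξ ∈ Icc a b, ψ ξ ≠ 0 := by
    rcases hψ_sign with h | h <;> intro ξ hξ <;> have := h ξ hξ <;> intro h0 <;> linarith
  have hψ_cont : ContinuousOn ψ (Icc a b) := fun ξ hξ =>
    (hψ ξ hξ).continuousAt.continuousWithinAt
  have hint : ∫ ξ in a..b, ψ' ξ / ψ ξ ^ 2 = (ψ a)⁻¹ - (ψ b)⁻¹ := by
    rw [integral_eq_sub_of_hasDerivAt (f := fun ξ => -(ψ ξ)⁻¹)]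
    · ring
    · intro ξ hξ
      rw [uIcc_of_le hab] at hξ
      exact ((hψ ξ hξ).inv (hne ξ hξ)).neg.congr_deriv (by ring)
    · refine ContinuousOn.intervalIntegrable ?_
      rw [uIcc_of_le hab]
      exact hψ'.div (hψ_cont.pow 2) fun ξ hξ => pow_ne_zero 2 (hne ξ hξ)
  have ha := left_mem_Icc.2 hab
  have hb := right_mem_Icc.2 hab
  rw [hint]
  rcases hψ_sign with h | h
  · have : 0 < (ψ b)⁻¹ := inv_pos.2 (by linarith [h b hb])
    linarith [inv_anti₀ hm (h a ha), one_div m]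
  · have : (ψ a)⁻¹ < 0 := inv_lt_zero.2 (by linarith [h a ha])
    have := inv_anti₀ hm (show m ≤ -ψ b by linarith [h b hb])
    rw [inv_neg] at this
    linarith [one_div m]

theorem integral_cexp_I_mul_eq_sub_integral (hab : a ≤ b)
    (hφ : ∀ ξ ∈ Icc a b, HasDerivAt φ (ψ ξ) ξ) (hψ : ∀ ξ ∈ Icc a b, HasDerivAt ψ (ψ' ξ) ξ)
    (hψ' : ContinuousOn ψ' (Icc a b)) (hψ_ne : ∀ ξ ∈ Icc a b, ψ ξ ≠ 0) :
    ∫ ξ in a..b, Complex.exp (Complex.I * φ ξ) =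
      Complex.I * (Complex.exp (Complex.I * φ a) / ψ a - Complex.exp (Complex.I * φ b) / ψ b) -
        ∫ ξ in a..b, Complex.I * ψ' ξ / (ψ ξ : ℂ) ^ 2 * Complex.exp (Complex.I * φ ξ) := by
  have hne : ∀ ξ ∈ Icc a b, (ψ ξ : ℂ) ≠ 0 := fun ξ hξ => Complex.ofReal_ne_zero.2 (hψ_ne ξ hξ)
  have hφ_cont : ContinuousOn φ (Icc a b) := fun ξ hξ =>
    (hφ ξ hξ).continuousAt.continuousWithinAt
  have hψ_cont : ContinuousOn ψ (Icc a b) := fun ξ hξ =>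
    (hψ ξ hξ).continuousAt.continuousWithinAt
  set v : ℝ → ℂ := fun ξ => Complex.exp (Complex.I * φ ξ)
  set u : ℝ → ℂ := fun ξ => -Complex.I * (ψ ξ : ℂ)⁻¹
  have hv : ∀ ξ ∈ Icc a b, HasDerivAt v (Complex.I * ψ ξ * v ξ) ξ := fun ξ hξ =>
    (((hφ ξ hξ).ofReal_comp).const_mul Complex.I).cexp.congr_deriv (by ring)
  have hu : ∀ ξ ∈ Icc a b, HasDerivAt u (Complex.I * ψ' ξ / (ψ ξ : ℂ) ^ 2) ξ := fun ξ hξ =>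
    ((((hψ ξ hξ).ofReal_comp).inv (hne ξ hξ)).const_mul (-Complex.I)).congr_deriv (by ring)
  have hu'_int : IntervalIntegrable (fun ξ => Complex.I * ψ' ξ / (ψ ξ : ℂ) ^ 2)
      MeasureTheory.volume a b := by
    refine ContinuousOn.intervalIntegrable (uIcc_of_le hab ▸ ?_)
    exact ContinuousOn.div (by fun_prop) (by fun_prop) fun ξ hξ => pow_ne_zero 2 (hne ξ hξ)
  have hv'_int : IntervalIntegrable (fun ξ => Complex.I * ψ ξ * v ξ) MeasureTheory.volume a b :=
    ContinuousOn.intervalIntegrable (uIcc_of_le hab ▸ by fun_prop)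
  have huv' : ∀ ξ ∈ uIcc a b, u ξ * (Complex.I * ψ ξ * v ξ) = v ξ := fun ξ hξ => by
    have := hne ξ (uIcc_of_le hab ▸ hξ)
    calc u ξ * (Complex.I * ψ ξ * v ξ)
        = -(Complex.I * Complex.I) * ((ψ ξ : ℂ)⁻¹ * ψ ξ) * v ξ := by ring
      _ = v ξ := by rw [Complex.I_mul_I, inv_mul_cancel₀ this]; ring
  rw [← integral_congr huv', integral_mul_deriv_eq_deriv_mul
    (fun ξ hξ => hu ξ (uIcc_of_le hab ▸ hξ)) (fun ξ hξ => hv ξ (uIcc_of_le hab ▸ hξ))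
    hu'_int hv'_int]
  ring

theorem norm_integral_cexp_I_mul_le_of_monotone_deriv (hab : a ≤ b) (hm : 0 < m)
    (hφ : ∀ ξ ∈ Icc a b, HasDerivAt φ (ψ ξ) ξ) (hψ : ∀ ξ ∈ Icc a b, HasDerivAt ψ (ψ' ξ) ξ)
    (hψ' : ContinuousOn ψ' (Icc a b)) (hψ'_nonneg : ∀ ξ ∈ Icc a b, 0 ≤ ψ' ξ)
    (hψ_sign : (∀ ξ ∈ Icc a b, m ≤ ψ ξ) ∨ ∀ ξ ∈ Icc a b, ψ ξ ≤ -m) :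
    ‖∫ ξ in a..b, Complex.exp (Complex.I * φ ξ)‖ ≤ 3 / m := by
  have hψ_abs : ∀ ξ ∈ Icc a b, m ≤ |ψ ξ| := by
    rcases hψ_sign with h | h <;> intro ξ hξ <;> have := h ξ hξ
    · exact this.trans (le_abs_self _)
    · exact (le_neg.2 this).trans (neg_le_abs _)
  have hψ_ne : ∀ ξ ∈ Icc a b, ψ ξ ≠ 0 := fun ξ hξ => abs_pos.1 (hm.trans_le (hψ_abs ξ hξ))
  have hψ_cont : ContinuousOn ψ (Icc a b) := fun ξ hξ =>
    (hψ ξ hξ).continuousAt.continuousWithinAt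
  have hboundary : ∀ ξ ∈ Icc a b, ‖Complex.exp (Complex.I * φ ξ) / ψ ξ‖ ≤ 1 / m := fun ξ hξ => by
    simpa [Complex.norm_exp] using one_div_le_one_div_of_le hm (hψ_abs ξ hξ)
  have hremainder :
      ‖∫ ξ in a..b, Complex.I * ψ' ξ / (ψ ξ : ℂ) ^ 2 * Complex.exp (Complex.I * φ ξ)‖ ≤ 1 / m := by
    refine (norm_integral_le_of_norm_le hab (g := fun ξ => ψ' ξ / ψ ξ ^ 2) ?_ ?_).trans
      (integral_deriv_div_sq_le hab hm hψ hψ' hψ_sign)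
    · refine MeasureTheory.ae_of_all _ fun ξ hξ => le_of_eq ?_
      simp [Complex.norm_exp, abs_of_nonneg (hψ'_nonneg ξ (Ioc_subset_Icc_self hξ))]
    · exact ContinuousOn.intervalIntegrable (uIcc_of_le hab ▸
        hψ'.div (hψ_cont.pow 2) fun ξ hξ => pow_ne_zero 2 (hψ_ne ξ hξ))
  rw [integral_cexp_I_mul_eq_sub_integral hab hφ hψ hψ' hψ_ne]
  calc _ ≤ ‖Complex.exp (Complex.I * φ a) / ψ a‖ + ‖Complex.exp (Complex.I * φ b) / ψ b‖ +
        ‖∫ ξ in a..b, Complex.I * ψ' ξ / (ψ ξ : ℂ) ^ 2 * Complex.exp (Complex.I * φ ξ)‖ := by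
        refine (norm_sub_le _ _).trans ?_
        rw [norm_mul, Complex.norm_I, one_mul]
        gcongr
        exact norm_sub_le _ _
    _ ≤ 1 / m + 1 / m + 1 / m := by
        gcongr
        exacts [hboundary a (left_mem_Icc.2 hab), hboundary b (right_mem_Icc.2 hab)]
    _ = 3 / m := by ring

theorem norm_integral_cexp_I_mul_le_of_monotone_deriv_of_sign_change {c δ : ℝ} (hab : a ≤ b)
    (hm : 0 < m) (hδ : 0 ≤ δ)
    (hφ : ∀ ξ ∈ Icc a b, HasDerivAt φ (ψ ξ) ξ) (hψ : ∀ ξ ∈ Icc a b, HasDerivAt ψ (ψ' ξ) ξ)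
    (hψ' : ContinuousOn ψ' (Icc a b)) (hψ'_nonneg : ∀ ξ ∈ Icc a b, 0 ≤ ψ' ξ)
    (hψ_neg : ∀ ξ ∈ Icc a b, ξ ≤ c - δ → ψ ξ ≤ -m)
    (hψ_pos : ∀ ξ ∈ Icc a b, c + δ ≤ ξ → m ≤ ψ ξ) :
    ‖∫ ξ in a..b, Complex.exp (Complex.I * φ ξ)‖ ≤ 2 * δ + 6 / m := by
  set v : ℝ → ℂ := fun ξ => Complex.exp (Complex.I * φ ξ)
  have hv : ContinuousOn v (Icc a b) := by
    have : ContinuousOn φ (Icc a b) := fun ξ hξ => (hφ ξ hξ).continuousAt.continuousWithinAt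
    fun_prop
  have hv_int : ∀ u ∈ Icc a b, ∀ w ∈ Icc a b, IntervalIntegrable v MeasureTheory.volume u w :=
    fun u hu w hw => (hv.mono (uIcc_subset_Icc hu hw)).intervalIntegrable
  set p := max a (min b (c - δ))
  set q := min b (max a (c + δ))
  have hap : a ≤ p := le_max_left _ _
  have hqb : q ≤ b := min_le_left _ _
  have hpq : p ≤ q := le_min (max_le hab (min_le_left _ _))
    (max_le_max_left _ ((min_le_right _ _).trans (by linarith)))
  have hIcc_left : Icc a p ⊆ Icc a b := Icc_subset_Icc_right (hpq.trans hqb)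
  have hIcc_right : Icc q b ⊆ Icc a b := Icc_subset_Icc_left (hap.trans hpq)
  have h_left : ‖∫ ξ in a..p, v ξ‖ ≤ 3 / m := by
    obtain hp | hp : p = a ∨ p = min b (c - δ) := max_choice _ _
    · rw [hp, integral_same, norm_zero]
      positivity
    · exact norm_integral_cexp_I_mul_le_of_monotone_deriv hap hm
        (fun ξ hξ => hφ ξ (hIcc_left hξ)) (fun ξ hξ => hψ ξ (hIcc_left hξ)) (hψ'.mono hIcc_left)
        (fun ξ hξ => hψ'_nonneg ξ (hIcc_left hξ))
        (Or.inr fun ξ hξ => hψ_neg ξ (hIcc_left hξ) (hξ.2.trans (hp.trans_le (min_le_right _ _))))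
  have h_right : ‖∫ ξ in q..b, v ξ‖ ≤ 3 / m := by
    obtain hq | hq : q = b ∨ q = max a (c + δ) := min_choice _ _
    · rw [hq, integral_same, norm_zero]
      positivity
    · exact norm_integral_cexp_I_mul_le_of_monotone_deriv hqb hm
        (fun ξ hξ => hφ ξ (hIcc_right hξ)) (fun ξ hξ => hψ ξ (hIcc_right hξ)) (hψ'.mono hIcc_right)
        (fun ξ hξ => hψ'_nonneg ξ (hIcc_right hξ))
        (Or.inl fun ξ hξ => hψ_pos ξ (hIcc_right hξ)
          ((le_max_right _ _).trans (hq.symm.trans_le hξ.1)))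
  have h_mid : ‖∫ ξ in p..q, v ξ‖ ≤ 2 * δ := by
    refine (norm_integral_le_of_norm_le_const (C := 1) fun ξ _ => ?_).trans ?_
    · simp [v, Complex.norm_exp]
    rw [one_mul, abs_of_nonneg (sub_nonneg.2 hpq)]
    simp only [p, q, max_def, min_def]
    split_ifs <;> linarith
  have ha : a ∈ Icc a b := left_mem_Icc.2 hab
  have hb : b ∈ Icc a b := right_mem_Icc.2 hab
  have hp : p ∈ Icc a b := ⟨hap, hpq.trans hqb⟩
  have hq : q ∈ Icc a b := ⟨hap.trans hpq, hqb⟩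
  rw [← integral_add_adjacent_intervals (hv_int a ha p hp) (hv_int p hp b hb),
    ← integral_add_adjacent_intervals (hv_int p hp q hq) (hv_int q hq b hb)]
  calc _ ≤ ‖∫ ξ in a..p, v ξ‖ + (‖∫ ξ in p..q, v ξ‖ + ‖∫ ξ in q..b, v ξ‖) :=
        (norm_add_le _ _).trans (by gcongr; exact norm_add_le _ _)
    _ ≤ 3 / m + (2 * δ + 3 / m) := by gcongr
    _ = 2 * δ + 6 / m := by ring

end VanDerCorput

theorem exists_tendsto_intervalIntegral_of_norm_integral_le {E : Type*} [NormedAddCommGroup E]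
    [NormedSpace ℝ E] [CompleteSpace E] {f : ℝ → E} (hf : Continuous f) (a : ℝ)
    (htail : ∀ ε > 0, ∃ N, ∀ u v, N ≤ u → u ≤ v → ‖∫ ξ in u..v, f ξ‖ ≤ ε) :
    ∃ L, Tendsto (fun R => ∫ ξ in a..R, f ξ) atTop (nhds L) := by
  refine cauchySeq_tendsto_of_complete (Metric.cauchySeq_iff'.2 fun ε hε => ?_)
  obtain ⟨N, hN⟩ := htail (ε / 2) (half_pos hε)
  refine ⟨N, fun R hR => ?_⟩
  rw [dist_eq_norm, integral_interval_sub_left (hf.intervalIntegrable _ _)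
    (hf.intervalIntegrable _ _)]
  exact (hN N R le_rfl hR).trans_lt (half_lt_self hε)

open scoped ComplexConjugate in
theorem intervalIntegral_neg_eq_add_conj {f : ℝ → ℂ} (hf : Continuous f)
    (hf_neg : ∀ ξ, f (-ξ) = conj (f ξ)) (R : ℝ) :
    ∫ ξ in (-R)..R, f ξ = (∫ ξ in 0..R, f ξ) + conj (∫ ξ in 0..R, f ξ) := by
  rw [← integral_add_adjacent_intervals (hf.intervalIntegrable (-R) 0)
    (hf.intervalIntegrable 0 R), add_comm, ← intervalIntegral_conj]
  simp only [← hf_neg, integral_comp_neg, neg_zero]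

namespace Boussinesq

noncomputable def dispersion (ξ : ℝ) : ℝ := ξ * √(1 + ξ ^ 2)

noncomputable def dispersionDeriv (ξ : ℝ) : ℝ := (1 + 2 * ξ ^ 2) / √(1 + ξ ^ 2)

noncomputable def dispersionDeriv2 (ξ : ℝ) : ℝ := ξ * (3 + 2 * ξ ^ 2) / √(1 + ξ ^ 2) ^ 3

theorem sqrt_one_add_sq_pos (ξ : ℝ) : 0 < √(1 + ξ ^ 2) := Real.sqrt_pos.2 (by positivity)

theorem sq_sqrt_one_add_sq (ξ : ℝ) : √(1 + ξ ^ 2) ^ 2 = 1 + ξ ^ 2 := Real.sq_sqrt (by positivity)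

theorem hasDerivAt_sqrt_one_add_sq (ξ : ℝ) :
    HasDerivAt (fun ξ => √(1 + ξ ^ 2)) (ξ / √(1 + ξ ^ 2)) ξ := by
  have := sqrt_one_add_sq_pos ξ
  refine ((hasDerivAt_pow 2 ξ).const_add 1).sqrt (by positivity) |>.congr_deriv ?_
  field_simp
  ring

theorem hasDerivAt_dispersion (ξ : ℝ) : HasDerivAt dispersion (dispersionDeriv ξ) ξ := by
  have := sqrt_one_add_sq_pos ξ
  refine ((hasDerivAt_id' ξ).mul (hasDerivAt_sqrt_one_add_sq ξ)).congr_deriv ?_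
  rw [dispersionDeriv]
  field_simp
  linear_combination sq_sqrt_one_add_sq ξ

theorem hasDerivAt_dispersionDeriv (ξ : ℝ) : HasDerivAt dispersionDeriv (dispersionDeriv2 ξ) ξ := by
  have := sqrt_one_add_sq_pos ξ
  refine ((((hasDerivAt_pow 2 ξ).const_mul 2).const_add 1).div (hasDerivAt_sqrt_one_add_sq ξ)
    this.ne').congr_deriv ?_
  rw [dispersionDeriv2]
  field_simp
  linear_combination (4 * ξ) * sq_sqrt_one_add_sq ξ

theorem continuous_dispersionDeriv2 : Continuous dispersionDeriv2 :=
  .div (by fun_prop) (by fun_prop) fun ξ => (pow_pos (sqrt_one_add_sq_pos ξ) 3).ne'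

theorem le_dispersionDeriv (ξ : ℝ) : ξ ≤ dispersionDeriv ξ := by
  have hs := sqrt_one_add_sq_pos ξ
  rw [dispersionDeriv, le_div_iff₀ hs]
  nlinarith [sq_sqrt_one_add_sq ξ, sq_nonneg (ξ - √(1 + ξ ^ 2))]

theorem dispersionDeriv2_nonneg {ξ : ℝ} (hξ : 0 ≤ ξ) : 0 ≤ dispersionDeriv2 ξ := by
  have := sqrt_one_add_sq_pos ξ
  unfold dispersionDeriv2
  positivity

theorem min_le_dispersionDeriv2 {ξ : ℝ} (hξ : 0 ≤ ξ) : min ξ 1 ≤ dispersionDeriv2 ξ := by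
  have hs := sqrt_one_add_sq_pos ξ
  have hsq := sq_sqrt_one_add_sq ξ
  have hcube : √(1 + ξ ^ 2) ^ 3 = √(1 + ξ ^ 2) * (1 + ξ ^ 2) := by
    rw [pow_succ, hsq]; ring
  rw [dispersionDeriv2, le_div_iff₀ (by positivity), hcube]
  rcases le_total ξ 1 with h1 | h1
  · rw [min_eq_left h1]
    have hs32 : √(1 + ξ ^ 2) ≤ 3/2 := by nlinarith
    nlinarith [mul_le_mul_of_nonneg_left hs32 (by positivity : 0 ≤ ξ * (1 + ξ ^ 2))]
  · rw [min_eq_right h1]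
    have hs32 : √(1 + ξ ^ 2) ≤ 3/2 * ξ := by nlinarith
    nlinarith [mul_le_mul_of_nonneg_left hs32 (by positivity : 0 ≤ 1 + ξ ^ 2)]

theorem monotoneOn_dispersionDeriv : MonotoneOn dispersionDeriv (Ici 0) :=
  monotoneOn_of_hasDerivWithinAt_nonneg (convex_Ici 0)
    (fun ξ _ => (hasDerivAt_dispersionDeriv ξ).continuousAt.continuousWithinAt)
    (fun ξ _ => (hasDerivAt_dispersionDeriv ξ).hasDerivWithinAt)
    (fun _ hξ => dispersionDeriv2_nonneg (interior_subset hξ))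

theorem dispersionDeriv_add_sq_div_two_le {u v δ : ℝ} (hu : 0 ≤ u) (hδ : 0 ≤ δ) (hδ1 : δ ≤ 1)
    (huv : u + δ ≤ v) : dispersionDeriv u + δ ^ 2 / 2 ≤ dispersionDeriv v := by
  have hmono : MonotoneOn (fun ξ => dispersionDeriv ξ - (ξ - u) ^ 2 / 2) (Icc u (u + 1)) := by
    have hderiv (ξ : ℝ) : HasDerivAt (fun ξ => dispersionDeriv ξ - (ξ - u) ^ 2 / 2)
        (dispersionDeriv2 ξ - (ξ - u)) ξ :=
      ((hasDerivAt_dispersionDeriv ξ).sub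
        ((((hasDerivAt_id' ξ).sub_const u).pow 2).div_const 2)).congr_deriv (by ring)
    refine monotoneOn_of_hasDerivWithinAt_nonneg (convex_Icc _ _)
      (fun ξ _ => (hderiv ξ).continuousAt.continuousWithinAt)
      (fun ξ _ => (hderiv ξ).hasDerivWithinAt) fun ξ hξ => ?_
    rw [interior_Icc] at hξ
    have := min_le_dispersionDeriv2 (hu.trans hξ.1.le)
    have : ξ - u ≤ min ξ 1 := le_min (by linarith) (by linarith [hξ.2])
    linarith
  have h1 := hmono ⟨le_rfl, by linarith⟩ ⟨by linarith, by linarith⟩ (by linarith : u ≤ u + δ)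
  have h2 := monotoneOn_dispersionDeriv (mem_Ici.2 (by linarith))
    (mem_Ici.2 (by linarith)) huv
  simp only [sub_self, add_sub_cancel_left] at h1
  linarith

noncomputable def phase (x t ξ : ℝ) : ℝ := x * ξ + t * dispersion ξ

theorem phase_neg (x t ξ : ℝ) : phase x t (-ξ) = -phase x t ξ := by
  simp only [phase, dispersion, neg_sq]
  ring

theorem continuous_cexp_I_mul_phase (x t : ℝ) :
    Continuous fun ξ => Complex.exp (Complex.I * phase x t ξ) := by
  unfold phase dispersion
  fun_prop

theorem hasDerivAt_phase (x t ξ : ℝ) :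
    HasDerivAt (phase x t) (x + t * dispersionDeriv ξ) ξ :=
  (((hasDerivAt_id' ξ).const_mul x).add ((hasDerivAt_dispersion ξ).const_mul t)).congr_deriv
    (by ring)

theorem hasDerivAt_phaseDeriv (x t ξ : ℝ) :
    HasDerivAt (fun ξ => x + t * dispersionDeriv ξ) (t * dispersionDeriv2 ξ) ξ :=
  ((hasDerivAt_dispersionDeriv ξ).const_mul t).const_add x

theorem exists_sign_change_phaseDeriv (x : ℝ) {t : ℝ} (ht : 0 < t) :
    ∃ ξ₀, 0 ≤ ξ₀ ∧ 0 ≤ x + t * dispersionDeriv ξ₀ ∧ (0 < ξ₀ → x + t * dispersionDeriv ξ₀ = 0) := by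
  by_cases h₀ : 0 ≤ x + t * dispersionDeriv 0
  · exact ⟨0, le_rfl, h₀, fun h => absurd h (lt_irrefl 0)⟩
  have hM : 0 ≤ x + t * dispersionDeriv (|x| / t) := by
    have := mul_le_mul_of_nonneg_left (le_dispersionDeriv (|x| / t)) ht.le
    rw [mul_div_cancel₀ _ ht.ne'] at this
    linarith [neg_abs_le x]
  obtain ⟨ξ₀, hξ₀, hroot⟩ := intermediate_value_Icc (by positivity)
    (fun ξ _ => (hasDerivAt_phaseDeriv x t ξ).continuousAt.continuousWithinAt)
    ⟨(not_le.1 h₀).le, hM⟩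
  exact ⟨ξ₀, hξ₀.1, hroot.ge, fun _ => hroot⟩

theorem norm_integral_cexp_I_mul_phase_le_of_pos (x : ℝ) {t u v : ℝ} (ht : 0 ≤ t) (hu : 0 ≤ u)
    (huv : u ≤ v) (hpos : 0 < x + t * u) :
    ‖∫ ξ in u..v, Complex.exp (Complex.I * phase x t ξ)‖ ≤ 3 / (x + t * u) :=
  norm_integral_cexp_I_mul_le_of_monotone_deriv huv hpos (fun ξ _ => hasDerivAt_phase x t ξ)
    (fun ξ _ => hasDerivAt_phaseDeriv x t ξ)
    (continuous_const.mul continuous_dispersionDeriv2).continuousOn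
    (fun ξ hξ => mul_nonneg ht (dispersionDeriv2_nonneg (hu.trans hξ.1)))
    (Or.inl fun ξ hξ => by
      nlinarith [mul_le_mul_of_nonneg_left (hξ.1.trans (le_dispersionDeriv ξ)) ht])

theorem norm_integral_zero_cexp_I_mul_phase_le (x : ℝ) {t R : ℝ} (ht : 1 ≤ t) (hR : 0 ≤ R) :
    ‖∫ ξ in 0..R, Complex.exp (Complex.I * phase x t ξ)‖ ≤ 14 * t ^ (-(1 : ℝ) / 3) := by
  have ht₀ : 0 < t := one_pos.trans_le ht
  set δ := t ^ (-(1 : ℝ) / 3)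
  have hδ : 0 < δ := Real.rpow_pos_of_pos ht₀ _
  have hδ₁ : δ ≤ 1 := Real.rpow_le_one_of_one_le_of_nonpos ht (by norm_num)
  have htδ : t * δ ^ 3 = 1 := by
    rw [← Real.rpow_natCast, ← Real.rpow_mul ht₀.le]
    norm_num [Real.rpow_neg_one, ht₀.ne']
  set m := t * δ ^ 2 / 2
  have hm : 0 < m := by positivity
  have hgain {u v : ℝ} (hu : 0 ≤ u) (huv : u + δ ≤ v) :
      x + t * dispersionDeriv u + m ≤ x + t * dispersionDeriv v := by
    linear_combination
      mul_le_mul_of_nonneg_left (dispersionDeriv_add_sq_div_two_le hu hδ.le hδ₁ huv) ht₀.le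
  obtain ⟨ξ₀, hξ₀, hψξ₀, hroot⟩ := exists_sign_change_phaseDeriv x ht₀
  calc _ ≤ 2 * δ + 6 / m :=
        norm_integral_cexp_I_mul_le_of_monotone_deriv_of_sign_change hR hm hδ.le (c := ξ₀)
          (fun ξ _ => hasDerivAt_phase x t ξ) (fun ξ _ => hasDerivAt_phaseDeriv x t ξ)
          (continuous_const.mul continuous_dispersionDeriv2).continuousOn
          (fun ξ hξ => mul_nonneg ht₀.le (dispersionDeriv2_nonneg hξ.1))
          (fun ξ hξ hle => by
            linarith [hgain (v := ξ₀) hξ.1 (by linarith), hroot (by linarith [hξ.1])])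
          (fun ξ hξ hle => by linarith [hgain hξ₀ hle])
    _ = 14 * δ := by
        field_simp
        linear_combination -6 * htδ

theorem exists_tendsto_integral_zero_cexp_I_mul_phase (x : ℝ) {t : ℝ} (ht : 1 ≤ t) :
    ∃ L, Tendsto (fun R => ∫ ξ in 0..R, Complex.exp (Complex.I * phase x t ξ)) atTop (nhds L) ∧
      ‖L‖ ≤ 14 * t ^ (-(1 : ℝ) / 3) := by
  have ht₀ : 0 < t := one_pos.trans_le ht
  obtain ⟨L, hL⟩ := exists_tendsto_intervalIntegral_of_norm_integral_le
    (continuous_cexp_I_mul_phase x t) 0 fun ε hε => by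
      refine ⟨max 0 ((3 / ε - x) / t), fun u v hu huv => ?_⟩
      have hu₀ : 0 ≤ u := (le_max_left _ _).trans hu
      have hxu : 3 / ε ≤ x + t * u := by
        have := (le_max_right _ _).trans hu
        rw [div_le_iff₀ ht₀] at this
        linarith
      calc _ ≤ 3 / (x + t * u) := norm_integral_cexp_I_mul_phase_le_of_pos x ht₀.le hu₀ huv
            ((div_pos three_pos hε).trans_le hxu)
        _ ≤ 3 / (3 / ε) := by gcongr
        _ = ε := by field_simp
  refine ⟨L, hL, le_of_tendsto hL.norm ?_⟩
  filter_upwards [eventually_ge_atTop 0] with R hR using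
    norm_integral_zero_cexp_I_mul_phase_le x ht hR

open scoped ComplexConjugate in
theorem cexp_I_mul_phase_neg (x t ξ : ℝ) :
    Complex.exp (Complex.I * phase x t (-ξ)) = conj (Complex.exp (Complex.I * phase x t ξ)) := by
  rw [← Complex.exp_conj, phase_neg]
  simp

end Boussinesq

open Boussinesq in
open scoped ComplexConjugate in
theorem oscillatory_integral_boussinesq_large_time :
    ∃ C : ℝ, 0 < C ∧ ∀ x t : ℝ, 1 ≤ t →
      ∃ L : ℂ,
        Tendsto
          (fun R : ℝ => ∫ ξ in (-R)..R,
            Complex.exp (Complex.I * ((x : ℂ) * (ξ : ℂ) +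
              (t : ℂ) * (ξ : ℂ) * (Real.sqrt (1 + ξ ^ 2) : ℂ))))
          atTop (nhds L) ∧
        ‖L‖ ≤ C * t ^ (-(1 : ℝ) / 3) := by
  refine ⟨28, by norm_num, fun x t ht => ?_⟩
  obtain ⟨L, hL, hL_le⟩ := exists_tendsto_integral_zero_cexp_I_mul_phase x ht
  have hintegrand : (fun ξ : ℝ => Complex.exp (Complex.I * ((x : ℂ) * (ξ : ℂ) +
      (t : ℂ) * (ξ : ℂ) * (Real.sqrt (1 + ξ ^ 2) : ℂ)))) =
      fun ξ => Complex.exp (Complex.I * phase x t ξ) := by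
    ext ξ
    congr 2
    push_cast [phase, dispersion]
    ring
  refine ⟨L + conj L, ?_, ?_⟩
  · simp_rw [hintegrand, intervalIntegral_neg_eq_add_conj
      (continuous_cexp_I_mul_phase x t) (cexp_I_mul_phase_neg x t)]
    exact hL.add ((Complex.continuous_conj.tendsto L).comp hL)
  · calc ‖L + conj L‖ ≤ ‖L‖ + ‖conj L‖ := norm_add_le _ _
      _ = 2 * ‖L‖ := by rw [RCLike.norm_conj]; ring
      _ ≤ 28 * t ^ (-(1 : ℝ) / 3) := by linarith
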